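/- arXiv:2501.09467 — 6 statements merged into one kernel-verified Lean document; each statement's English description precedes it below -/
import Mathlib

section
/- Let X be a set of feasible routing solutions, let B be a budget, and let (s₁,t₁,d₁,f₁) and (s₂,t₂,d₂,f₂) be two tuples such that, for i = 1,2: tᵢ ≥ 0, (dᵢ,fᵢ) ∈ X is lower-level optimal for (sᵢ,tᵢ), and the budget constraint sᵢ·fᵢ − tᵢ·dᵢ = B holds; assume 0 ≤ s₁ < 1, 0 ≤ s₂ ≤ 1, and (s₂,t₂) ≠ (0,0). Then the driven distance of the first solution is strictly smaller than that of the second if and only if the first freight forwarder's total cost is strictly larger, i.e., d₁ < d₂ ⟺ (1+t₁)·d₁ + (1−s₁)·f₁ > (1+t₂)·d₂ + (1−s₂)·f₂. -/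
/-!
Under the budget constraint `s f - t d = B` the forwarder's cost `(1 + t) d + (1 - s) f` equals
`d + f - B`, so comparing the two costs amounts to comparing `d + f`. Each solution is at least
as cheap as the other one under its own policy, and a policy with `s + t ≥ 0` weighs driving at
least as heavily as freight (`1 + t ≥ 1 - s`): a solution that drives more must therefore save
at least as much on freight as it adds in distance, and strictly more when `s + t > 0`.
-/

lemma forwarderCost_eq_sub_budget {s t d f B : ℝ} (hB : s * f - t * d = B) :
    (1 + t) * d + (1 - s) * f = d + f - B := by
  rw [← hB]; ring

lemma add_pos_of_prod_ne_zero {s t : ℝ} (hs : 0 ≤ s) (ht : 0 ≤ t) (hne : (s, t) ≠ (0, 0)) :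
    0 < s + t := by
  by_contra! h
  exact hne (Prod.ext (by linarith) (by linarith))

lemma add_lt_add_of_cost_le_of_lt {s t d f d' f' : ℝ} (hs : s ≤ 1) (hst : 0 < s + t)
    (hcost : (1 + t) * d + (1 - s) * f ≤ (1 + t) * d' + (1 - s) * f')
    (hd : d' < d) : d + f < d' + f' := by
  have ht : 0 < 1 + t := by linarith
  have hgap : (1 + t) * (d - d') ≤ (1 - s) * (f' - f) := by linarith
  have hf : 0 < f' - f := by nlinarith
  nlinarith

lemma add_le_add_of_cost_le_of_le {s t d f d' f' : ℝ} (hs : s < 1) (hst : 0 ≤ s + t)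
    (hcost : (1 + t) * d + (1 - s) * f ≤ (1 + t) * d' + (1 - s) * f')
    (hd : d' ≤ d) : d + f ≤ d' + f' := by
  have hgap : (1 + t) * (d - d') ≤ (1 - s) * (f' - f) := by linarith
  have hf : 0 ≤ f' - f := by nlinarith
  nlinarith

theorem stmt2_general (X : Set (ℝ × ℝ))
    (B : ℝ)
    (s₁ t₁ d₁ f₁ s₂ t₂ d₂ f₂ : ℝ)
    (hs₁ : 0 ≤ s₁) (hs₁' : s₁ < 1) (ht₁ : 0 ≤ t₁)
    (hs₂ : 0 ≤ s₂) (hs₂' : s₂ ≤ 1) (ht₂ : 0 ≤ t₂)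
    (hne₂ : (s₂, t₂) ≠ ((0 : ℝ), (0 : ℝ)))
    (hmem₁ : (d₁, f₁) ∈ X)
    (hopt₁ : ∀ p ∈ X,
      (1 + t₁) * d₁ + (1 - s₁) * f₁ ≤ (1 + t₁) * p.1 + (1 - s₁) * p.2)
    (hmem₂ : (d₂, f₂) ∈ X)
    (hopt₂ : ∀ p ∈ X,
      (1 + t₂) * d₂ + (1 - s₂) * f₂ ≤ (1 + t₂) * p.1 + (1 - s₂) * p.2)
    (hB₁ : s₁ * f₁ - t₁ * d₁ = B)
    (hB₂ : s₂ * f₂ - t₂ * d₂ = B) :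
    d₁ < d₂ ↔
      (1 + t₁) * d₁ + (1 - s₁) * f₁ > (1 + t₂) * d₂ + (1 - s₂) * f₂ := by
  rw [forwarderCost_eq_sub_budget hB₁, forwarderCost_eq_sub_budget hB₂, gt_iff_lt,
    sub_lt_sub_iff_right]
  constructor
  · exact add_lt_add_of_cost_le_of_lt hs₂' (add_pos_of_prod_ne_zero hs₂ ht₂ hne₂)
      (hopt₂ _ hmem₁)
  · intro hcost
    by_contra! hd
    exact hcost.not_ge (add_le_add_of_cost_le_of_le hs₁' (by positivity) (hopt₁ _ hmem₂) hd)

/-- Proposition 1: For a given budget `B` and two feasible policy–solution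
tuples `(sᵢ,tᵢ,dᵢ,fᵢ)` satisfying the budget constraint `sᵢ·fᵢ − tᵢ·dᵢ = B`,
with `0 ≤ s₁ < 1`, `0 ≤ s₂ ≤ 1`, `tᵢ ≥ 0`, `(s₂,t₂) ≠ (0,0)`, the driven
distance of the first solution is strictly smaller than that of the second iff
the first freight forwarder's total cost is strictly larger. -/
theorem stmt2 (X : Set (ℝ × ℝ)) (hX : X.Nonempty)
    (hXnn : ∀ p ∈ X, 0 ≤ p.1 ∧ 0 ≤ p.2)
    (B : ℝ)
    (s₁ t₁ d₁ f₁ s₂ t₂ d₂ f₂ : ℝ)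
    (hs₁ : 0 ≤ s₁) (hs₁' : s₁ < 1) (ht₁ : 0 ≤ t₁)
    (hs₂ : 0 ≤ s₂) (hs₂' : s₂ ≤ 1) (ht₂ : 0 ≤ t₂)
    (hne₂ : (s₂, t₂) ≠ ((0 : ℝ), (0 : ℝ)))
    (hmem₁ : (d₁, f₁) ∈ X)
    (hopt₁ : ∀ p ∈ X,
      (1 + t₁) * d₁ + (1 - s₁) * f₁ ≤ (1 + t₁) * p.1 + (1 - s₁) * p.2)
    (hmem₂ : (d₂, f₂) ∈ X)
    (hopt₂ : ∀ p ∈ X,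
      (1 + t₂) * d₂ + (1 - s₂) * f₂ ≤ (1 + t₂) * p.1 + (1 - s₂) * p.2)
    (hB₁ : s₁ * f₁ - t₁ * d₁ = B)
    (hB₂ : s₂ * f₂ - t₂ * d₂ = B) :
    d₁ < d₂ ↔
      (1 + t₁) * d₁ + (1 - s₁) * f₁ > (1 + t₂) * d₂ + (1 - s₂) * f₂ :=
  stmt2_general X B s₁ t₁ d₁ f₁ s₂ t₂ d₂ f₂ hs₁ hs₁' ht₁ hs₂ hs₂' ht₂ hne₂ hmem₁ hopt₁ hmem₂ hopt₂
    hB₁ hB₂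
end

section
/- Let X be a set of feasible routing solutions and B a budget. Let (s₁,t₁,d₁,f₁) and (s₂,t₂,d₂,f₂) be two tuples such that, for i = 1,2: 0 ≤ sᵢ ≤ 1, tᵢ ≥ 0, (dᵢ,fᵢ) ∈ X is lower-level optimal for (sᵢ,tᵢ), and sᵢ·fᵢ − tᵢ·dᵢ = B. If t₁ < t₂, then d₁ ≥ d₂; that is, for a given budget the driven distance is non-increasing in the tax level. -/
/-!
Suppose `d₁ < d₂`. Adding the two lower-level optimality conditions (each optimum compared with
the other one) gives `(t₂ - t₁)(d₂ - d₁) ≤ (s₂ - s₁)(f₂ - f₁)`, and optimality of `(d₂, f₂)`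
alone forces `f₂ < f₁`, since otherwise `(d₁, f₁)` would be cheaper under `(s₂, t₂)`.
Hence `s₂ < s₁`: the second policy pays a smaller subsidy on less freight and collects a larger
tax on a longer distance, so its net budget is strictly smaller than the first one's.
-/

def forwarderCost (s t : ℝ) (p : ℝ × ℝ) : ℝ := (1 + t) * p.1 + (1 - s) * p.2

def IsLowerLevelOptimal (X : Set (ℝ × ℝ)) (s t : ℝ) (p : ℝ × ℝ) : Prop :=
  p ∈ X ∧ ∀ q ∈ X, forwarderCost s t p ≤ forwarderCost s t q

section LowerLevel

variable {X : Set (ℝ × ℝ)} {s₁ t₁ s₂ t₂ : ℝ} {p₁ p₂ : ℝ × ℝ}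

theorem tax_gap_mul_distance_gap_le (h₁ : IsLowerLevelOptimal X s₁ t₁ p₁)
    (h₂ : IsLowerLevelOptimal X s₂ t₂ p₂) :
    (t₂ - t₁) * (p₂.1 - p₁.1) ≤ (s₂ - s₁) * (p₂.2 - p₁.2) := by
  have h₁₂ := h₁.2 p₂ h₂.1
  have h₂₁ := h₂.2 p₁ h₁.1
  simp only [forwarderCost] at h₁₂ h₂₁
  linarith

theorem freight_lt_of_distance_lt (h₂ : IsLowerLevelOptimal X s₂ t₂ p₂) (hs : s₂ ≤ 1)
    (ht : 0 < 1 + t₂) (hp₁ : p₁ ∈ X) (hd : p₁.1 < p₂.1) : p₂.2 < p₁.2 := by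
  by_contra! hf
  have hcost : forwarderCost s₂ t₂ p₁ < forwarderCost s₂ t₂ p₂ :=
    add_lt_add_of_lt_of_le (mul_lt_mul_of_pos_left hd ht)
      (mul_le_mul_of_nonneg_left hf (sub_nonneg.mpr hs))
  exact hcost.not_ge (h₂.2 p₁ hp₁)

end LowerLevel

theorem stmt4_general (X : Set (ℝ × ℝ))
    (hXnn : ∀ p ∈ X, 0 ≤ p.1 ∧ 0 ≤ p.2)
    (B : ℝ)
    (s₁ t₁ d₁ f₁ s₂ t₂ d₂ f₂ : ℝ)
    (hs₁ : 0 ≤ s₁) (ht₁ : 0 ≤ t₁)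
    (hs₂' : s₂ ≤ 1)
    (hmem₁ : (d₁, f₁) ∈ X)
    (hopt₁ : ∀ p ∈ X,
      (1 + t₁) * d₁ + (1 - s₁) * f₁ ≤ (1 + t₁) * p.1 + (1 - s₁) * p.2)
    (hB₁ : s₁ * f₁ - t₁ * d₁ = B)
    (hmem₂ : (d₂, f₂) ∈ X)
    (hopt₂ : ∀ p ∈ X,
      (1 + t₂) * d₂ + (1 - s₂) * f₂ ≤ (1 + t₂) * p.1 + (1 - s₂) * p.2)
    (hB₂ : s₂ * f₂ - t₂ * d₂ = B)
    (ht : t₁ < t₂) :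
    d₁ ≥ d₂ := by
  by_contra! hd
  have h₁ : IsLowerLevelOptimal X s₁ t₁ (d₁, f₁) := ⟨hmem₁, hopt₁⟩
  have h₂ : IsLowerLevelOptimal X s₂ t₂ (d₂, f₂) := ⟨hmem₂, hopt₂⟩
  have hd₁ : 0 ≤ d₁ := (hXnn _ hmem₁).1
  have hf₂ : 0 ≤ f₂ := (hXnn _ hmem₂).2
  have hf : f₂ < f₁ := freight_lt_of_distance_lt h₂ hs₂' (by linarith) hmem₁ hd
  have hs : s₂ < s₁ := by
    have hpos : 0 < (s₂ - s₁) * (f₂ - f₁) :=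
      (mul_pos (sub_pos.mpr ht) (sub_pos.mpr hd)).trans_le (tax_gap_mul_distance_gap_le h₁ h₂)
    exact sub_neg.mp (neg_of_mul_pos_left hpos (sub_nonpos.mpr hf.le))
  have hsubsidy : s₂ * f₂ ≤ s₁ * f₁ := mul_le_mul hs.le hf.le hf₂ hs₁
  have htax : t₁ * d₁ < t₂ * d₂ := mul_lt_mul'' ht hd ht₁ hd₁
  linarith

/-- Proposition 2: For a given budget `B` and two feasible
policy–solution tuples with `0 ≤ sᵢ ≤ 1`, `tᵢ ≥ 0`, lower-level optimality,
and budget constraints `sᵢ·fᵢ − tᵢ·dᵢ = B`, if `t₁ < t₂` then `d₁ ≥ d₂`: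
the driven distance is non-increasing in the tax level. -/
theorem stmt4 (X : Set (ℝ × ℝ)) (hX : X.Nonempty)
    (hXnn : ∀ p ∈ X, 0 ≤ p.1 ∧ 0 ≤ p.2)
    (B : ℝ)
    (s₁ t₁ d₁ f₁ s₂ t₂ d₂ f₂ : ℝ)
    (hs₁ : 0 ≤ s₁) (hs₁' : s₁ ≤ 1) (ht₁ : 0 ≤ t₁)
    (hs₂ : 0 ≤ s₂) (hs₂' : s₂ ≤ 1) (ht₂ : 0 ≤ t₂)
    (hmem₁ : (d₁, f₁) ∈ X)
    (hopt₁ : ∀ p ∈ X,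
      (1 + t₁) * d₁ + (1 - s₁) * f₁ ≤ (1 + t₁) * p.1 + (1 - s₁) * p.2)
    (hB₁ : s₁ * f₁ - t₁ * d₁ = B)
    (hmem₂ : (d₂, f₂) ∈ X)
    (hopt₂ : ∀ p ∈ X,
      (1 + t₂) * d₂ + (1 - s₂) * f₂ ≤ (1 + t₂) * p.1 + (1 - s₂) * p.2)
    (hB₂ : s₂ * f₂ - t₂ * d₂ = B)
    (ht : t₁ < t₂) :
    d₁ ≥ d₂ :=
  stmt4_general X hXnn B s₁ t₁ d₁ f₁ s₂ t₂ d₂ f₂ hs₁ ht₁ hs₂' hmem₁ hopt₁ hB₁ hmem₂ hopt₂ hB₂ ht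
end

section
/- Let X be a set of feasible routing solutions and B a budget. Suppose (d,f) ∈ X is lower-level optimal for a policy (s,t) with 0 ≤ s ≤ 1, t ≥ 0, d > 0, f ≥ 0, and s·f − t·d = B. Let s' satisfy s < s' ≤ 1 and define the adjusted tax rate t' := (s'·f − B)/d. Then: (i) t' ≥ t ≥ 0; (ii) the budget constraint still holds at the new policy, s'·f − t'·d = B; and (iii) for every (d₂,f₂) ∈ X with d₂ > d, the solution (d,f) is weakly preferred by the freight forwarder under (s',t'), i.e., (1+t')·d + (1−s')·f ≤ (1+t')·d₂ + (1−s')·f₂. In particular, raising the subsidy while adjusting the tax to preserve the budget never forces a larger driven distance. -/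
/-- key step of Proposition 3: If `(d,f) ∈ X` is lower-level optimal
for `(s,t)` with `0 ≤ s ≤ 1`, `t ≥ 0`, `d > 0`, `f ≥ 0` and `s·f − t·d = B`,
then for any higher subsidy `s < s' ≤ 1` the adjusted tax rate
`t' = (s'·f − B)/d` satisfies: (i) `t' ≥ t` (hence `t' ≥ 0`), (ii) the budget
constraint `s'·f − t'·d = B`, and (iii) `(d,f)` is weakly preferred under
`(s',t')` over every feasible solution with strictly larger driven distance. -/
theorem stmt6 (X : Set (ℝ × ℝ)) (hX : X.Nonempty)
    (hXnn : ∀ p ∈ X, 0 ≤ p.1 ∧ 0 ≤ p.2)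
    (B : ℝ)
    (s t d f : ℝ)
    (hs : 0 ≤ s) (hs' : s ≤ 1) (ht : 0 ≤ t) (hd : 0 < d) (hf : 0 ≤ f)
    (hmem : (d, f) ∈ X)
    (hopt : ∀ p ∈ X,
      (1 + t) * d + (1 - s) * f ≤ (1 + t) * p.1 + (1 - s) * p.2)
    (hB : s * f - t * d = B)
    (s' : ℝ) (hss' : s < s') (hs'1 : s' ≤ 1) :
    (s' * f - B) / d ≥ t ∧ 0 ≤ (s' * f - B) / d ∧
    s' * f - ((s' * f - B) / d) * d = B ∧
    (∀ p ∈ X, d < p.1 →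
      (1 + (s' * f - B) / d) * d + (1 - s') * f ≤
        (1 + (s' * f - B) / d) * p.1 + (1 - s') * p.2) := by
  have hdne : d ≠ 0 := ne_of_gt hd
  have hmul : ((s' * f - B) / d) * d = s' * f - B := div_mul_cancel₀ _ hdne
  have ht' : (s' * f - B) / d ≥ t := by
    rw [ge_iff_le, le_div_iff₀ hd]
    nlinarith [mul_nonneg (sub_nonneg.mpr hss'.le) hf]
  refine ⟨ht', le_trans ht ht', by linarith, ?_⟩
  intro p hp hdp
  have hopt' := hopt p hp
  have hp2 := (hXnn p hp).2
  have key : (1 - s') * (f - p.2) ≤ (1 + (s' * f - B) / d) * (p.1 - d) := by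
    rcases le_or_gt p.2 f with h | h
    · have h1 : (1 - s) * (f - p.2) ≤ (1 + t) * (p.1 - d) := by nlinarith
      have h2 : (1 - s') * (f - p.2) ≤ (1 - s) * (f - p.2) := by nlinarith
      have h3 : (1 + t) * (p.1 - d) ≤ (1 + (s' * f - B) / d) * (p.1 - d) := by
        apply mul_le_mul_of_nonneg_right _ (by linarith)
        linarith
      linarith
    · have : (1 - s') * (f - p.2) ≤ 0 := mul_nonpos_of_nonneg_of_nonpos (by linarith) (by linarith)
      have : (0:ℝ) ≤ (1 + (s' * f - B) / d) * (p.1 - d) :=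
        mul_nonneg (by linarith) (by linarith)
      linarith
  linarith [key]
end

section
/- Let X be a set of feasible routing solutions and let (d_full, f_full) ∈ X satisfy: d_full ≤ d for all (d,f) ∈ X, and f ≤ f_full for all (d,f) ∈ X with d = d_full (i.e., f_full is the scheduled-line cost of the freight forwarder's solution under the fully subsidized, untaxed policy (1,0)). If the budget B satisfies B > f_full, then the tax-and-subsidy setting problem is infeasible: there is no tuple (s,t,d,f) with 0 ≤ s ≤ 1, t ≥ 0, (d,f) ∈ X lower-level optimal for (s,t), and s·f − t·d = B. -/
/-!
Comparing a lower-level optimal solution `(d, f)` with `(d_full, f_full)`: since `d_full ≤ d`,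
optimality forces `f ≤ f_full` (for `s < 1` because freight is still priced, for `s = 1`
because then `d = d_full`). Hence the budget `s f - t d ≤ f ≤ f_full < B` cannot be met.
-/

lemma snd_le_of_cost_le {s t : ℝ} (hs : s ≤ 1) (ht : 0 ≤ t) {p q : ℝ × ℝ}
    (hcost : (1 + t) * p.1 + (1 - s) * p.2 ≤ (1 + t) * q.1 + (1 - s) * q.2)
    (hfst : q.1 ≤ p.1) (htie : p.1 = q.1 → p.2 ≤ q.2) : p.2 ≤ q.2 := by
  have hdist : 0 ≤ (1 + t) * (p.1 - q.1) := mul_nonneg (by linarith) (sub_nonneg.2 hfst)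
  rcases hs.lt_or_eq with hlt | rfl
  · have : (1 - s) * (p.2 - q.2) ≤ 0 := by linarith
    exact sub_nonpos.1 (nonpos_of_mul_nonpos_right this (sub_pos.2 hlt))
  · refine htie (le_antisymm ?_ hfst)
    exact le_of_mul_le_mul_left (by linarith) (by linarith : (0 : ℝ) < 1 + t)

theorem stmt9_general (X : Set (ℝ × ℝ))
    (hXnn : ∀ p ∈ X, 0 ≤ p.1 ∧ 0 ≤ p.2)
    (dfull ffull : ℝ)
    (hmem : (dfull, ffull) ∈ X)
    (hmin : ∀ p ∈ X, dfull ≤ p.1)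
    (hmax : ∀ p ∈ X, p.1 = dfull → p.2 ≤ ffull)
    (B : ℝ) (hB : ffull < B) :
    ¬ ∃ s t d f : ℝ, 0 ≤ s ∧ s ≤ 1 ∧ 0 ≤ t ∧
      (d, f) ∈ X ∧
      (∀ p ∈ X,
        (1 + t) * d + (1 - s) * f ≤ (1 + t) * p.1 + (1 - s) * p.2) ∧
      s * f - t * d = B := by
  rintro ⟨s, t, d, f, -, hs1, ht0, hdf, hopt, hbud⟩
  have hf : f ≤ ffull :=
    snd_le_of_cost_le (p := (d, f)) hs1 ht0 (hopt _ hmem) (hmin _ hdf) (hmax _ hdf)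
  obtain ⟨hd0, hf0⟩ := hXnn _ hdf
  have htax : 0 ≤ t * d := mul_nonneg ht0 hd0
  have hsub : s * f ≤ f := mul_le_of_le_one_left hf0 hs1
  linarith

/-- Proposition 4, infeasible case: Let `(d_full, f_full) ∈ X` satisfy
`d_full ≤ d` for all `(d,f) ∈ X` and `f ≤ f_full` for all `(d,f) ∈ X` with
`d = d_full` (i.e., `f_full` is the scheduled-line cost under the fully
subsidized, untaxed policy `(1,0)`). If `B > f_full`, then there is no tuple
`(s,t,d,f)` with `0 ≤ s ≤ 1`, `t ≥ 0`, `(d,f) ∈ X` lower-level optimal for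
`(s,t)`, and `s·f − t·d = B`. -/
theorem stmt9 (X : Set (ℝ × ℝ)) (hX : X.Nonempty)
    (hXnn : ∀ p ∈ X, 0 ≤ p.1 ∧ 0 ≤ p.2)
    (dfull ffull : ℝ)
    (hmem : (dfull, ffull) ∈ X)
    (hmin : ∀ p ∈ X, dfull ≤ p.1)
    (hmax : ∀ p ∈ X, p.1 = dfull → p.2 ≤ ffull)
    (B : ℝ) (hB : ffull < B) :
    ¬ ∃ s t d f : ℝ, 0 ≤ s ∧ s ≤ 1 ∧ 0 ≤ t ∧
      (d, f) ∈ X ∧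
      (∀ p ∈ X,
        (1 + t) * d + (1 - s) * f ≤ (1 + t) * p.1 + (1 - s) * p.2) ∧
      s * f - t * d = B :=
  stmt9_general X hXnn dfull ffull hmem hmin hmax B hB
end

section
/- Under a full subsidy, the freight forwarder's optimal driven distance does not depend on the tax rate: if X is a set of feasible routing solutions and, for i = 1,2, the pair (dᵢ,fᵢ) ∈ X is lower-level optimal for the policy (sᵢ,tᵢ) with s₁ = s₂ = 1 and t₁, t₂ ≥ 0, then d₁ = d₂. -/
theorem stmt10_general (X : Set (ℝ × ℝ))
    (s₁ t₁ d₁ f₁ s₂ t₂ d₂ f₂ : ℝ)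
    (hs₁ : s₁ = 1) (hs₂ : s₂ = 1)
    (ht₁ : 0 ≤ t₁) (ht₂ : 0 ≤ t₂)
    (hmem₁ : (d₁, f₁) ∈ X)
    (hopt₁ : ∀ p ∈ X,
      (1 + t₁) * d₁ + (1 - s₁) * f₁ ≤ (1 + t₁) * p.1 + (1 - s₁) * p.2)
    (hmem₂ : (d₂, f₂) ∈ X)
    (hopt₂ : ∀ p ∈ X,
      (1 + t₂) * d₂ + (1 - s₂) * f₂ ≤ (1 + t₂) * p.1 + (1 - s₂) * p.2) :
    d₁ = d₂ := by
  subst hs₁ hs₂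
  -- with a full subsidy the cost is `(1 + t) * d`, and `1 + t > 0`, so both points minimise `d`
  have h₁ : (1 + t₁) * d₁ ≤ (1 + t₁) * d₂ := by simpa using hopt₁ (d₂, f₂) hmem₂
  have h₂ : (1 + t₂) * d₂ ≤ (1 + t₂) * d₁ := by simpa using hopt₂ (d₁, f₁) hmem₁
  exact le_antisymm (le_of_mul_le_mul_left h₁ (by linarith))
    (le_of_mul_le_mul_left h₂ (by linarith))

/-- Under a full subsidy the optimal driven distance does not depend
on the tax rate: if `(dᵢ,fᵢ) ∈ X` is lower-level optimal for `(sᵢ,tᵢ)` with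
`s₁ = s₂ = 1` and `t₁, t₂ ≥ 0`, then `d₁ = d₂`. -/
theorem stmt10 (X : Set (ℝ × ℝ)) (hX : X.Nonempty)
    (hXnn : ∀ p ∈ X, 0 ≤ p.1 ∧ 0 ≤ p.2)
    (s₁ t₁ d₁ f₁ s₂ t₂ d₂ f₂ : ℝ)
    (hs₁ : s₁ = 1) (hs₂ : s₂ = 1)
    (ht₁ : 0 ≤ t₁) (ht₂ : 0 ≤ t₂)
    (hmem₁ : (d₁, f₁) ∈ X)
    (hopt₁ : ∀ p ∈ X,
      (1 + t₁) * d₁ + (1 - s₁) * f₁ ≤ (1 + t₁) * p.1 + (1 - s₁) * p.2)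
    (hmem₂ : (d₂, f₂) ∈ X)
    (hopt₂ : ∀ p ∈ X,
      (1 + t₂) * d₂ + (1 - s₂) * f₂ ≤ (1 + t₂) * p.1 + (1 - s₂) * p.2) :
    d₁ = d₂ :=
  stmt10_general X s₁ t₁ d₁ f₁ s₂ t₂ d₂ f₂ hs₁ hs₂ ht₁ ht₂ hmem₁ hopt₁ hmem₂ hopt₂
end

section
/- If both the subsidy level and the tax rate increase, the freight forwarder's optimal driven distance cannot increase (no budget constraint required): let X be a set of feasible routing solutions and, for i = 1,2, let (dᵢ,fᵢ) ∈ X be lower-level optimal for the policy (sᵢ,tᵢ) with 0 ≤ sᵢ ≤ 1 and tᵢ ≥ 0. If s₁ < s₂ and t₁ < t₂, then d₁ ≥ d₂. -/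
/-!
Adding the two optimality inequalities (each optimum evaluated against the other) gives the
exchange inequality `(t₂ - t₁)(d₂ - d₁) + (s₂ - s₁)(f₁ - f₂) ≤ 0`. If `d₂ > d₁`, optimality
of `(d₂, f₂)` against `(d₁, f₁)` forces `f₂ < f₁`, so both summands are positive: contradiction.
-/

def weightedCost (a b : ℝ) (p : ℝ × ℝ) : ℝ := a * p.1 + b * p.2

section

variable {X : Set (ℝ × ℝ)} {a₁ b₁ a₂ b₂ : ℝ} {p q : ℝ × ℝ}

theorem weightedCost_exchange_nonpos (hp : p ∈ X) (hq : q ∈ X)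
    (hpmin : IsMinOn (weightedCost a₁ b₁) X p) (hqmin : IsMinOn (weightedCost a₂ b₂) X q) :
    (a₂ - a₁) * (q.1 - p.1) + (b₂ - b₁) * (q.2 - p.2) ≤ 0 := by
  have hpq := isMinOn_iff.1 hpmin q hq
  have hqp := isMinOn_iff.1 hqmin p hp
  simp only [weightedCost] at hpq hqp
  linarith

theorem snd_lt_of_isMinOn_weightedCost_of_fst_lt (ha : 0 < a₂) (hb : 0 ≤ b₂) (hp : p ∈ X)
    (hqmin : IsMinOn (weightedCost a₂ b₂) X q) (hlt : p.1 < q.1) : q.2 < p.2 := by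
  have hqp := isMinOn_iff.1 hqmin p hp
  simp only [weightedCost] at hqp
  by_contra! hle
  nlinarith [mul_pos ha (sub_pos.2 hlt), mul_nonneg hb (sub_nonneg.2 hle)]

theorem fst_le_of_isMinOn_weightedCost (ha : a₁ < a₂) (hb : b₂ ≤ b₁) (ha₂ : 0 < a₂)
    (hb₂ : 0 ≤ b₂) (hp : p ∈ X) (hq : q ∈ X)
    (hpmin : IsMinOn (weightedCost a₁ b₁) X p) (hqmin : IsMinOn (weightedCost a₂ b₂) X q) :
    q.1 ≤ p.1 := by
  by_contra! hlt
  have hsnd := snd_lt_of_isMinOn_weightedCost_of_fst_lt ha₂ hb₂ hp hqmin hlt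
  have hexch := weightedCost_exchange_nonpos hp hq hpmin hqmin
  nlinarith [mul_pos (sub_pos.2 ha) (sub_pos.2 hlt),
    mul_nonneg (sub_nonneg.2 hb) (sub_nonneg.2 hsnd.le)]

end

theorem stmt12_general (X : Set (ℝ × ℝ))
    (s₁ t₁ d₁ f₁ s₂ t₂ d₂ f₂ : ℝ)
    (hs₂' : s₂ ≤ 1) (ht₂ : 0 ≤ t₂)
    (hmem₁ : (d₁, f₁) ∈ X)
    (hopt₁ : ∀ p ∈ X,
      (1 + t₁) * d₁ + (1 - s₁) * f₁ ≤ (1 + t₁) * p.1 + (1 - s₁) * p.2)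
    (hmem₂ : (d₂, f₂) ∈ X)
    (hopt₂ : ∀ p ∈ X,
      (1 + t₂) * d₂ + (1 - s₂) * f₂ ≤ (1 + t₂) * p.1 + (1 - s₂) * p.2)
    (hs : s₁ < s₂) (ht : t₁ < t₂) :
    d₁ ≥ d₂ :=
  fst_le_of_isMinOn_weightedCost (by linarith) (by linarith) (by linarith) (by linarith)
    hmem₁ hmem₂ (isMinOn_iff.2 hopt₁) (isMinOn_iff.2 hopt₂)

/-- If both the subsidy level and the tax rate increase, the freight
forwarder's optimal driven distance cannot increase (no budget constraint
required): if `(dᵢ,fᵢ) ∈ X` is lower-level optimal for `(sᵢ,tᵢ)` with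
`0 ≤ sᵢ ≤ 1`, `tᵢ ≥ 0`, and `s₁ < s₂`, `t₁ < t₂`, then `d₁ ≥ d₂`. -/
theorem stmt12 (X : Set (ℝ × ℝ)) (hX : X.Nonempty)
    (hXnn : ∀ p ∈ X, 0 ≤ p.1 ∧ 0 ≤ p.2)
    (s₁ t₁ d₁ f₁ s₂ t₂ d₂ f₂ : ℝ)
    (hs₁ : 0 ≤ s₁) (hs₁' : s₁ ≤ 1) (ht₁ : 0 ≤ t₁)
    (hs₂ : 0 ≤ s₂) (hs₂' : s₂ ≤ 1) (ht₂ : 0 ≤ t₂)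
    (hmem₁ : (d₁, f₁) ∈ X)
    (hopt₁ : ∀ p ∈ X,
      (1 + t₁) * d₁ + (1 - s₁) * f₁ ≤ (1 + t₁) * p.1 + (1 - s₁) * p.2)
    (hmem₂ : (d₂, f₂) ∈ X)
    (hopt₂ : ∀ p ∈ X,
      (1 + t₂) * d₂ + (1 - s₂) * f₂ ≤ (1 + t₂) * p.1 + (1 - s₂) * p.2)
    (hs : s₁ < s₂) (ht : t₁ < t₂) :
    d₁ ≥ d₂ :=
  stmt12_general X s₁ t₁ d₁ f₁ s₂ t₂ d₂ f₂ hs₂' ht₂ hmem₁ hopt₁ hmem₂ hopt₂ hs ht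
end
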